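/- Let μ_β be the Marchenko–Pastur density μ_β(x) = √((b_β − x)(x − a_β)) / (2πβx) on [a_β, b_β], where a_β = (1−√β)², b_β = (1+√β)², and 0 < β < 1. Then lim_{z→0⁻} ∫_{a_β}^{b_β} 1/(x/β − z) μ_β(x) dx = β/(1−β). -/

import Mathlib

/-! For `z < 0` and `x` in the support `[a, b] ⊂ (0, ∞)` the integrand is dominated by its
value at `z = 0`, so by dominated convergence the limit is
`(1 / 2π) ∫_a^b √((b - x)(x - a)) / x² dx`. This integral is elementary: it has a primitive
built from `√((b - x)(x - a)) / x` and two arcsines whose arguments run from `-1` to `1` across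
`[a, b]`, so it equals `π ((a + b) / (2√(ab)) - 1)`. For the Marchenko–Pastur edges
`a + b = 2(1 + β)` and `√(ab) = 1 - β`. -/

open Filter Real intervalIntegral
open Set MeasureTheory Topology Interval

section Primitive

variable {a b x : ℝ}

lemma hasDerivAt_sqrt_mul_sub (hx : x ∈ Ioo a b) :
    HasDerivAt (fun y => √((b - y) * (y - a)))
      ((a + b - 2 * x) / (2 * √((b - x) * (x - a)))) x := by
  have hpoly : HasDerivAt (fun y => (b - y) * (y - a)) (a + b - 2 * x) x :=
    (((hasDerivAt_id x).const_sub b).mul ((hasDerivAt_id x).sub_const a)).congr_deriv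
      (by simp only [id_eq]; ring)
  exact hpoly.sqrt (mul_pos (by linarith [hx.2]) (by linarith [hx.1])).ne'

lemma hasDerivAt_arcsin_affine (hx : x ∈ Ioo a b) :
    HasDerivAt (fun y => arcsin ((2 * y - a - b) / (b - a))) (1 / √((b - x) * (x - a))) x := by
  obtain ⟨hax, hxb⟩ := hx
  have hba : 0 < b - a := by linarith
  have hu : HasDerivAt (fun y => (2 * y - a - b) / (b - a)) (2 / (b - a)) x :=
    ((((hasDerivAt_id x).const_mul 2).sub_const a).sub_const b).div_const (b - a) |>.congr_deriv
      (by simp)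
  have hlo : (2 * x - a - b) / (b - a) ≠ -1 := by
    rw [ne_eq, div_eq_iff hba.ne']; intro h; linarith
  have hhi : (2 * x - a - b) / (b - a) ≠ 1 := by
    rw [ne_eq, div_eq_iff hba.ne']; intro h; linarith
  have hg : 0 < (b - x) * (x - a) := mul_pos (by linarith) (by linarith)
  have hsq : 1 - ((2 * x - a - b) / (b - a)) ^ 2 = (2 * √((b - x) * (x - a)) / (b - a)) ^ 2 := by
    rw [div_pow, div_pow, mul_pow, sq_sqrt hg.le]
    field_simp
    ring
  refine ((hasDerivAt_arcsin hlo hhi).comp x hu).congr_deriv ?_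
  rw [hsq, sqrt_sq (by positivity)]
  field_simp

lemma hasDerivAt_arcsin_moebius (ha : 0 < a) (hx : x ∈ Ioo a b) :
    HasDerivAt (fun y => arcsin (((a + b) * y - 2 * a * b) / ((b - a) * y)))
      (√(a * b) / (x * √((b - x) * (x - a)))) x := by
  obtain ⟨hax, hxb⟩ := hx
  have hx0 : 0 < x := ha.trans hax
  have hba : 0 < b - a := by linarith
  have hden : 0 < (b - a) * x := mul_pos hba hx0
  have hu : HasDerivAt (fun y => ((a + b) * y - 2 * a * b) / ((b - a) * y))
      (2 * a * b / ((b - a) * x ^ 2)) x := by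
    refine ((((hasDerivAt_id x).const_mul (a + b)).sub_const (2 * a * b)).div
      ((hasDerivAt_id x).const_mul (b - a)) hden.ne').congr_deriv ?_
    simp only [id_eq]
    field_simp
    ring
  have hlo : ((a + b) * x - 2 * a * b) / ((b - a) * x) ≠ -1 := by
    rw [ne_eq, div_eq_iff hden.ne']; intro h; nlinarith
  have hhi : ((a + b) * x - 2 * a * b) / ((b - a) * x) ≠ 1 := by
    rw [ne_eq, div_eq_iff hden.ne']; intro h; nlinarith
  have hg : 0 < (b - x) * (x - a) := mul_pos (by linarith) (by linarith)
  have hab : 0 < a * b := mul_pos ha (by linarith)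
  have hsq : 1 - (((a + b) * x - 2 * a * b) / ((b - a) * x)) ^ 2
      = (2 * √(a * b) * √((b - x) * (x - a)) / ((b - a) * x)) ^ 2 := by
    rw [div_pow, div_pow, mul_pow, mul_pow, mul_pow, sq_sqrt hg.le, sq_sqrt hab.le]
    field_simp
    ring
  refine ((hasDerivAt_arcsin hlo hhi).comp x hu).congr_deriv ?_
  rw [hsq, sqrt_sq (by positivity)]
  field_simp
  rw [sq_sqrt hab.le]

noncomputable def sqrtMulSubDivSqPrimitive (a b x : ℝ) : ℝ :=
  -√((b - x) * (x - a)) / x - arcsin ((2 * x - a - b) / (b - a))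
    + (a + b) / (2 * √(a * b)) * arcsin (((a + b) * x - 2 * a * b) / ((b - a) * x))

lemma hasDerivAt_sqrtMulSubDivSqPrimitive (ha : 0 < a) (hx : x ∈ Ioo a b) :
    HasDerivAt (sqrtMulSubDivSqPrimitive a b) (√((b - x) * (x - a)) / x ^ 2) x := by
  have hx0 : 0 < x := ha.trans hx.1
  have hg : 0 < (b - x) * (x - a) := mul_pos (by linarith [hx.2]) (by linarith [hx.1])
  have ht : 0 < √(a * b) := sqrt_pos.2 (mul_pos ha (by linarith [hx.1, hx.2]))
  refine ((((hasDerivAt_sqrt_mul_sub hx).neg.div (hasDerivAt_id x) hx0.ne').sub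
    (hasDerivAt_arcsin_affine hx)).add
    ((hasDerivAt_arcsin_moebius ha hx).const_mul _)).congr_deriv ?_
  simp only [id_eq, Pi.neg_apply]
  field_simp
  rw [sq_sqrt hg.le]
  ring

lemma continuousOn_sqrtMulSubDivSqPrimitive (ha : 0 < a) (hab : a < b) :
    ContinuousOn (sqrtMulSubDivSqPrimitive a b) (Icc a b) := by
  have hne : ∀ x ∈ Icc a b, (b - a) * x ≠ 0 := fun x hx =>
    (mul_pos (sub_pos.2 hab) (ha.trans_le hx.1)).ne'
  have hne' : ∀ x ∈ Icc a b, x ≠ 0 := fun x hx => (ha.trans_le hx.1).ne'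
  unfold sqrtMulSubDivSqPrimitive
  refine ContinuousOn.add
    (ContinuousOn.sub ?_ (continuous_arcsin.comp (by fun_prop)).continuousOn)
    (continuousOn_const.mul (continuous_arcsin.comp_continuousOn ?_)) <;>
  fun_prop (disch := assumption)

theorem integral_sqrt_mul_sub_div_sq (ha : 0 < a) (hab : a < b) :
    ∫ x in a..b, √((b - x) * (x - a)) / x ^ 2 = π * ((a + b) / (2 * √(a * b)) - 1) := by
  have hba : b - a ≠ 0 := (sub_pos.2 hab).ne'
  have hint : IntervalIntegrable (fun x => √((b - x) * (x - a)) / x ^ 2) volume a b := by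
    refine ContinuousOn.intervalIntegrable ?_
    rw [uIcc_of_le hab.le]
    have : ∀ x ∈ Icc a b, x ^ 2 ≠ 0 := fun x hx => pow_ne_zero 2 (ha.trans_le hx.1).ne'
    fun_prop (disch := assumption)
  rw [integral_eq_sub_of_hasDerivAt_of_le hab.le (continuousOn_sqrtMulSubDivSqPrimitive ha hab)
    (fun x hx => hasDerivAt_sqrtMulSubDivSqPrimitive ha hx) hint]
  have hmoebius_b : ((a + b) * b - 2 * a * b) / ((b - a) * b) = 1 :=
    div_eq_one_iff_eq (mul_ne_zero hba (ha.trans hab).ne') |>.2 (by ring)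
  have hmoebius_a : ((a + b) * a - 2 * a * b) / ((b - a) * a) = -1 :=
    div_eq_iff (mul_ne_zero hba ha.ne') |>.2 (by ring)
  have haffine_b : (2 * b - a - b) / (b - a) = 1 := div_eq_one_iff_eq hba |>.2 (by ring)
  have haffine_a : (2 * a - a - b) / (b - a) = -1 := div_eq_iff hba |>.2 (by ring)
  simp only [sqrtMulSubDivSqPrimitive, hmoebius_b, hmoebius_a, haffine_b, haffine_a, sub_self, zero_mul, mul_zero,
    sqrt_zero, neg_zero, zero_div, arcsin_one, arcsin_neg_one]
  ring

end Primitive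

theorem tendsto_integral_inv_sub_mul_nhdsLT_zero {a b : ℝ} {φ g : ℝ → ℝ}
    (hφ : ContinuousOn φ [[a, b]]) (hφ_pos : ∀ x ∈ [[a, b]], 0 < φ x)
    (hg : IntervalIntegrable g volume a b) :
    Tendsto (fun z => ∫ x in a..b, 1 / (φ x - z) * g x) (𝓝[<] 0)
      (𝓝 (∫ x in a..b, 1 / φ x * g x)) := by
  refine tendsto_integral_filter_of_dominated_convergence (fun x => 1 / φ x * ‖g x‖) ?_ ?_ ?_ ?_
  · filter_upwards [self_mem_nhdsWithin] with z (hz : z < 0)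
    refine (ContinuousOn.aestronglyMeasurable ?_ measurableSet_uIoc).mul
      hg.def'.aestronglyMeasurable
    exact continuousOn_const.div (hφ.mono uIoc_subset_uIcc |>.sub continuousOn_const)
      fun x hx => by linarith [hφ_pos x (uIoc_subset_uIcc hx)]
  · filter_upwards [self_mem_nhdsWithin] with z (hz : z < 0)
    refine ae_of_all _ fun x hx => ?_
    have hφx := hφ_pos x (uIoc_subset_uIcc hx)
    have hφz : 0 < φ x - z := by linarith
    rw [norm_mul, Real.norm_of_nonneg (one_div_pos.2 hφz).le]
    gcongr
    linarith
  · exact hg.norm.continuousOn_mul (continuousOn_const.div hφ fun x hx => (hφ_pos x hx).ne')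
  · refine ae_of_all _ fun x hx => tendsto_nhdsWithin_of_tendsto_nhds ?_
    have hφx := (hφ_pos x (uIoc_subset_uIcc hx)).ne'
    have hcont : ContinuousAt (fun z => 1 / (φ x - z) * g x) 0 :=
      (continuousAt_const.div (continuousAt_const.sub continuousAt_id) (by simpa using hφx)).mul
        continuousAt_const
    simpa using hcont.tendsto

lemma sq_one_sub_sqrt_pos {β : ℝ} (hβ : β < 1) : 0 < (1 - √β) ^ 2 :=
  pow_pos (sub_pos.2 ((sqrt_lt' one_pos).2 (by rwa [one_pow]))) 2

lemma sq_one_sub_sqrt_lt_sq_one_add_sqrt {β : ℝ} (hβ : 0 < β) :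
    (1 - √β) ^ 2 < (1 + √β) ^ 2 := by
  nlinarith [sqrt_pos.2 hβ]

theorem integral_marchenkoPastur_mul_inv {β : ℝ} (hβ : β ∈ Ioo 0 1) :
    ∫ x in (1 - √β) ^ 2..(1 + √β) ^ 2, 1 / (x / β) *
      (√(((1 + √β) ^ 2 - x) * (x - (1 - √β) ^ 2)) / (2 * π * β * x)) = β / (1 - β) := by
  have ha := sq_one_sub_sqrt_pos hβ.2
  have hab := sq_one_sub_sqrt_lt_sq_one_add_sqrt hβ.1
  obtain ⟨hβ0, hβ1⟩ := hβ
  have hβ_sq : √β ^ 2 = β := sq_sqrt hβ0.le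
  have hsum : (1 - √β) ^ 2 + (1 + √β) ^ 2 = 2 * (1 + β) := by linear_combination 2 * hβ_sq
  have hprod : √((1 - √β) ^ 2 * (1 + √β) ^ 2) = 1 - β := by
    rw [← mul_pow, show (1 - √β) * (1 + √β) = 1 - β by linear_combination -hβ_sq,
      sqrt_sq (by linarith)]
  calc _ = ∫ x in (1 - √β) ^ 2..(1 + √β) ^ 2,
        1 / (2 * π) * (√(((1 + √β) ^ 2 - x) * (x - (1 - √β) ^ 2)) / x ^ 2) := by
        refine integral_congr fun x hx => ?_
        have hx0 : x ≠ 0 := (ha.trans_le (uIcc_of_le hab.le ▸ hx).1).ne'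
        field_simp
    _ = β / (1 - β) := by
        rw [intervalIntegral.integral_const_mul, integral_sqrt_mul_sub_div_sq ha hab, hsum, hprod]
        field_simp
        ring

/-- For the Marchenko–Pastur density `μ_β(x) = √((b_β−x)(x−a_β))/(2πβx)` on
`[a_β, b_β]` with `a_β = (1−√β)²`, `b_β = (1+√β)²` and `0 < β < 1`,
`lim_{z→0⁻} ∫_{a_β}^{b_β} μ_β(x)/(x/β − z) dx = β/(1−β)`. -/
theorem marchenko_pastur_stieltjes_limit_at_zero
    (β : ℝ) (hβ : β ∈ Set.Ioo (0 : ℝ) 1) :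
    Tendsto (fun z : ℝ =>
        ∫ x in ((1 - Real.sqrt β) ^ 2)..((1 + Real.sqrt β) ^ 2),
          (1 / (x / β - z)) *
            (Real.sqrt (((1 + Real.sqrt β) ^ 2 - x) * (x - (1 - Real.sqrt β) ^ 2))
              / (2 * Real.pi * β * x)))
      (nhdsWithin 0 (Set.Iio 0)) (nhds (β / (1 - β))) := by
  have hpos : ∀ x ∈ [[(1 - √β) ^ 2, (1 + √β) ^ 2]], 0 < x := fun x hx =>
    (sq_one_sub_sqrt_pos hβ.2).trans_le
      (uIcc_of_le (sq_one_sub_sqrt_lt_sq_one_add_sqrt hβ.1).le ▸ hx).1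
  have hden : ∀ x ∈ [[(1 - √β) ^ 2, (1 + √β) ^ 2]], 2 * π * β * x ≠ 0 := fun x hx =>
    (mul_pos (mul_pos (mul_pos two_pos pi_pos) hβ.1) (hpos x hx)).ne'
  rw [← integral_marchenkoPastur_mul_inv hβ]
  exact tendsto_integral_inv_sub_mul_nhdsLT_zero (by fun_prop)
    (fun x hx => div_pos (hpos x hx) hβ.1)
    (ContinuousOn.intervalIntegrable (by fun_prop (disch := assumption)))
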